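/- Let T₀ be a Silver tree and let f : 2^ω × ω^ω → 2^ω be continuous on [T₀] × ω^ω. Assume that for every dense G_δ set X ⊆ ω^ω, every v ∈ ω^{<ω}, every σ ∈ 2^{<ω}, and every Silver tree S ⊆ T₀, there exist a ∈ [S] and x ∈ B_v ∩ X such that f(a,x) ≠ σ⊕a. Then for every Silver tree T ⊆ T₀, every σ ∈ 2^{<ω}, every v ∈ ω^{<ω}, and every k < ω, there exist a tuple w ∈ ω^{<ω} with v ⊆ w and a Silver tree S ⊑_{k+1} T such that f(a,x) ∉ σ⊕[S] for all a ∈ [S] and x ∈ B_w. -/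
import Mathlib


open Set

/-- The word `u₀⌢i₀⌢u₁⌢i₁⌢…⌢u_n⌢i_n` built from the defining tuples `u`
and the choice of bits `i`. -/
def silverWord (u : ℕ → List Bool) (i : ℕ → Bool) : ℕ → List Bool
  | 0 => u 0 ++ [i 0]
  | n + 1 => silverWord u i n ++ (u (n + 1) ++ [i (n + 1)])

/-- `T ⊆ 2^{<ω}` is the Silver tree with defining tuples `u`: it consists of all
tuples `u₀⌢i₀⌢…⌢u_n⌢i_n` together with all their initial segments. -/
def IsSilver (T : Set (List Bool)) (u : ℕ → List Bool) : Prop :=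
  T = { s | ∃ (n : ℕ) (i : ℕ → Bool), s <+: silverWord u i n }

/-- `T` is a Silver tree. -/
def SilverTree (T : Set (List Bool)) : Prop :=
  ∃ u, IsSilver T u

/-- The portion `T↾u = {s ∈ T : u ⊆ s or s ⊆ u}`. -/
def portion (T : Set (List Bool)) (u : List Bool) : Set (List Bool) :=
  { s ∈ T | u <+: s ∨ s <+: u }

/-- The shift `σ⊕v` of a tuple `v` by a tuple `σ` (coordinatewise mod-2 sum,
with `σ` padded by `0` or truncated to the length of `v`). -/
def shiftT (σ v : List Bool) : List Bool :=
  List.ofFn fun i : Fin v.length => xor (v.get i) (σ.getD i.1 false)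

/-- The shift `σ⊕T` of a set of tuples. -/
def shiftTree (σ : List Bool) (T : Set (List Bool)) : Set (List Bool) :=
  shiftT σ '' T

/-- The shift `σ⊕a` of a point of Cantor space. -/
def shiftR (σ : List Bool) (a : ℕ → Bool) : ℕ → Bool :=
  fun i => xor (a i) (σ.getD i false)

/-- The restriction `a↾n ∈ 2^{<ω}` of `a ∈ 2^ω`. -/
def restrictReal (a : ℕ → Bool) (n : ℕ) : List Bool :=
  List.ofFn fun i : Fin n => a i.1

/-- `[T]`, the set of branches of `T`. -/
def branches (T : Set (List Bool)) : Set (ℕ → Bool) :=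
  { a | ∀ n, restrictReal a n ∈ T }

/-- The splitting levels `oi_T(n) = |u₀|+1+…+|u_{n-1}|+1+|u_n|` computed
from the defining tuples `u`. -/
def oi (u : ℕ → List Bool) (n : ℕ) : ℕ :=
  (∑ k ∈ Finset.range (n + 1), (u k).length) + n

/-- `S ⊑ₙ T` : `S ⊆ T` and the first `n` splitting levels agree. -/
def RefinesN (S T : Set (List Bool)) (n : ℕ) : Prop :=
  S ⊆ T ∧ ∀ uS uT : ℕ → List Bool, IsSilver S uS → IsSilver T uT →
    ∀ k < n, oi uS k = oi uT k

/-- `S` is clopen in `T` : `S` is a finite union of portions of `T`. -/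
def ClopenIn (S T : Set (List Bool)) : Prop :=
  ∃ F : Finset (List Bool), ↑F ⊆ T ∧ S = ⋃ u ∈ F, portion T u

/-- The Baire interval `B_v = {x ∈ ω^ω : v ⊂ x}`. -/
def baire (v : List ℕ) : Set (ℕ → ℕ) :=
  { x | ∀ i : Fin v.length, x i.1 = v.get i }

/-- `s ∈ 2^{<ω}` is an initial segment of `a ∈ 2^ω`. -/
def prefixOfReal (s : List Bool) (a : ℕ → Bool) : Prop :=
  ∀ i : Fin s.length, a i.1 = s.get i


/-! ### Auxiliary lemmas -/

lemma oi_zero' (u : ℕ → List Bool) : oi u 0 = (u 0).length := by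
  simp [oi]

lemma oi_succ' (u : ℕ → List Bool) (n : ℕ) :
    oi u (n+1) = oi u n + (u (n+1)).length + 1 := by
  simp [oi, Finset.sum_range_succ]; ring

lemma oi_strictMono (u : ℕ → List Bool) : StrictMono (oi u) := by
  apply strictMono_nat_of_lt_succ
  intro n; rw [oi_succ']; omega

lemma le_oi (u : ℕ → List Bool) (n : ℕ) : n ≤ oi u n :=
  Nat.le_of_lt_succ (Nat.lt_succ_of_le ((oi_strictMono u).le_apply))

lemma sw_length (u : ℕ → List Bool) (i : ℕ → Bool) (n : ℕ) :
    (silverWord u i n).length = oi u n + 1 := by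
  induction n with
  | zero => simp [silverWord, oi_zero']
  | succ n ih => simp [silverWord, ih, oi_succ']; ring

lemma sw_prefix_succ (u : ℕ → List Bool) (i : ℕ → Bool) (n : ℕ) :
    silverWord u i n <+: silverWord u i (n+1) :=
  ⟨u (n+1) ++ [i (n+1)], rfl⟩

lemma sw_prefix_le (u : ℕ → List Bool) (i : ℕ → Bool) {n n' : ℕ} (h : n ≤ n') :
    silverWord u i n <+: silverWord u i n' := by
  induction n' with
  | zero => rw [Nat.le_zero.mp h]
  | succ n' ih =>
    rcases eq_or_lt_of_le h with h' | h'
    · rw [h']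
    · exact (ih (Nat.lt_succ_iff.mp h')).trans (sw_prefix_succ u i n')

lemma prefix_getD {α : Type*} {d : α} {l₁ l₂ : List α} (h : l₁ <+: l₂) {j : ℕ}
    (hj : j < l₁.length) : l₂.getD j d = l₁.getD j d := by
  obtain ⟨t, rfl⟩ := h
  rw [List.getD_eq_getElem _ _ hj, List.getD_eq_getElem _ _ (by simp; omega),
    List.getElem_append_left hj]

lemma prefix_of_getD {α : Type*} {d : α} {l₁ l₂ : List α} (hlen : l₁.length ≤ l₂.length)
    (h : ∀ j, j < l₁.length → l₁.getD j d = l₂.getD j d) : l₁ <+: l₂ := by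
  rw [List.prefix_iff_eq_take]
  apply List.ext_getElem (by simp; omega)
  intro j h1 h2
  have hj : j < l₁.length := h1
  rw [List.getElem_take]
  have := h j hj
  rwa [List.getD_eq_getElem _ _ hj, List.getD_eq_getElem _ _ (by omega)] at this

lemma sw_getD_split (u : ℕ → List Bool) (i : ℕ → Bool) {r n : ℕ} (h : r ≤ n) :
    (silverWord u i n).getD (oi u r) false = i r := by
  induction n with
  | zero =>
    rw [Nat.le_zero.mp h]
    show (List.getD (u 0 ++ [i 0]) (oi u 0) false) = i 0
    rw [List.getD_eq_getElem _ _ (by simp [oi_zero']),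
      List.getElem_append_right (by simp [oi_zero'])]
    simp [oi_zero']
  | succ n ih =>
    rcases Nat.lt_succ_iff_lt_or_eq.mp (Nat.lt_succ_of_le h) with h' | h'
    · have hr : r ≤ n := Nat.lt_succ_iff.mp h'
      rw [prefix_getD (sw_prefix_le u i (Nat.le_succ n))
        (by rw [sw_length]; exact Nat.lt_succ_of_le (((oi_strictMono u).le_iff_le).mpr hr))]
      exact ih hr
    · subst h'
      show (List.getD (silverWord u i n ++ (u (n+1) ++ [i (n+1)])) (oi u (n+1)) false) = _
      rw [List.getD_eq_getElem _ _ (by simp [sw_length, oi_succ']; omega),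
        List.getElem_append_right (by rw [sw_length]; rw [oi_succ']; omega),
        List.getElem_append_right (by rw [sw_length, oi_succ']; omega)]
      simp [sw_length, oi_succ']

lemma sw_getD_indep (u : ℕ → List Bool) (i i' : ℕ → Bool) {j n : ℕ} (hjn : j ≤ oi u n)
    (hns : ∀ r, oi u r ≠ j) :
    (silverWord u i n).getD j false = (silverWord u i' n).getD j false := by
  induction n with
  | zero =>
    have hj : j < (u 0).length := by
      have := hns 0; rw [oi_zero'] at *; omega
    show (List.getD (u 0 ++ [i 0]) j false) = (List.getD (u 0 ++ [i' 0]) j false)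
    rw [List.getD_eq_getElem _ _ (by simp; omega), List.getD_eq_getElem _ _ (by simp; omega),
      List.getElem_append_left hj, List.getElem_append_left hj]
  | succ n ih =>
    rcases le_or_gt j (oi u n) with h' | h'
    · have hlt : j < (silverWord u i n).length := by rw [sw_length]; omega
      have hlt' : j < (silverWord u i' n).length := by rw [sw_length]; omega
      rw [prefix_getD (sw_prefix_le u i (Nat.le_succ n)) hlt,
        prefix_getD (sw_prefix_le u i' (Nat.le_succ n)) hlt']
      exact ih h'
    · have hj2 : j < oi u (n+1) := lt_of_le_of_ne hjn (fun h => (hns (n+1)) h.symm)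
      have hoff : j - (oi u n + 1) < (u (n+1)).length := by rw [oi_succ'] at hj2; omega
      show (List.getD (silverWord u i n ++ (u (n+1) ++ [i (n+1)])) j false) =
        (List.getD (silverWord u i' n ++ (u (n+1) ++ [i' (n+1)])) j false)
      rw [List.getD_eq_getElem _ _ (by simp [sw_length, oi_succ'] at *; omega),
        List.getD_eq_getElem _ _ (by simp [sw_length, oi_succ'] at *; omega),
        List.getElem_append_right (as := silverWord u i n) (by rw [sw_length]; omega),
        List.getElem_append_right (as := silverWord u i' n) (by rw [sw_length]; omega),
        List.getElem_append_left (as := u (n+1)) (by rw [sw_length]; exact hoff),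
        List.getElem_append_left (as := u (n+1)) (by rw [sw_length]; exact hoff)]
      simp [sw_length]

/-- The non-splitting pattern of a Silver system. -/
def patt (u : ℕ → List Bool) (j : ℕ) : Bool :=
  (silverWord u (fun _ => false) j).getD j false

lemma sw_getD_nonsplit (u : ℕ → List Bool) (i : ℕ → Bool) {j n : ℕ} (hjn : j ≤ oi u n)
    (hns : ∀ r, oi u r ≠ j) :
    (silverWord u i n).getD j false = patt u j := by
  have hjj : j < (silverWord u (fun _ => false) j).length := by
    rw [sw_length]; exact Nat.lt_succ_of_le (le_oi u j)
  have hjn' : j < (silverWord u i n).length := by rw [sw_length]; omega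
  calc (silverWord u i n).getD j false
      = (silverWord u i (max n j)).getD j false :=
        (prefix_getD (sw_prefix_le u i (le_max_left n j)) hjn').symm
    _ = (silverWord u (fun _ => false) (max n j)).getD j false :=
        sw_getD_indep u i _ (le_trans hjn (((oi_strictMono u).le_iff_le).mpr (le_max_left n j))) hns
    _ = patt u j := prefix_getD (sw_prefix_le u (fun _ => false) (le_max_right n j)) hjj

lemma restrictReal_length (a : ℕ → Bool) (n : ℕ) : (restrictReal a n).length = n := by
  simp [restrictReal]

lemma restrictReal_getD (a : ℕ → Bool) {n j : ℕ} (h : j < n) :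
    (restrictReal a n).getD j false = a j := by
  rw [List.getD_eq_getElem _ _ (by simpa [restrictReal_length])]
  simp [restrictReal]

lemma mem_char {T : Set (List Bool)} {u : ℕ → List Bool} (hu : IsSilver T u)
    {s : List Bool} :
    s ∈ T ↔ ∀ j, j < s.length → (∀ r, oi u r ≠ j) → s.getD j false = patt u j := by
  rw [hu]
  constructor
  · rintro ⟨n, i, hpre⟩ j hj hns
    have hlen : s.length ≤ oi u n + 1 := by
      rw [← sw_length u i n]; exact hpre.length_le
    rw [← prefix_getD hpre hj]
    exact sw_getD_nonsplit u i (by omega) hns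
  · intro h
    refine ⟨s.length, fun r => s.getD (oi u r) false, prefix_of_getD (d := false) ?_ ?_⟩
    · rw [sw_length]; have := le_oi u s.length; omega
    · intro j hj
      by_cases hsp : ∃ r, oi u r = j
      · obtain ⟨r, rfl⟩ := hsp
        rw [sw_getD_split u _ (le_trans (le_oi u r) (by omega))]
      · push_neg at hsp
        rw [h j hj hsp, sw_getD_nonsplit u _ (by have := le_oi u s.length; omega) hsp]

lemma branches_char {T : Set (List Bool)} {u : ℕ → List Bool} (hu : IsSilver T u)
    {a : ℕ → Bool} :
    a ∈ branches T ↔ ∀ j, (∀ r, oi u r ≠ j) → a j = patt u j := by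
  constructor
  · intro ha j hns
    have := (mem_char hu).mp (ha (j+1)) j (by simp [restrictReal_length]) hns
    rwa [restrictReal_getD a (by omega)] at this
  · intro h n
    rw [mem_char hu]
    intro j hj hns
    rw [restrictReal_getD a (by rwa [restrictReal_length] at hj)]
    exact h j hns

lemma branches_mono {S T : Set (List Bool)} (h : S ⊆ T) : branches S ⊆ branches T :=
  fun _ ha n => h (ha n)

lemma strictMono_enum_unique {p q : ℕ → ℕ} (hp : StrictMono p) (hq : StrictMono q)
    (h : ∀ j, (∃ r, p r = j) ↔ (∃ r, q r = j)) : ∀ n, p n = q n := by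
  intro n
  induction n using Nat.strong_induction_on with
  | _ n ih =>
    have h1 : q n ≤ p n := by
      obtain ⟨r, hr⟩ := (h (p n)).mp ⟨n, rfl⟩
      have hnr : n ≤ r := by
        by_contra hc
        push_neg at hc
        have := ih r hc
        have := hp.lt_iff_lt.mpr hc
        omega
      calc q n ≤ q r := hq.monotone hnr
        _ = p n := hr
    have h2 : p n ≤ q n := by
      obtain ⟨r, hr⟩ := (h (q n)).mpr ⟨n, rfl⟩
      have hnr : n ≤ r := by
        by_contra hc
        push_neg at hc
        have h3 := ih r hc
        have := hq.lt_iff_lt.mpr hc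
        omega
      calc p n ≤ p r := hp.monotone hnr
        _ = q n := hr
    omega

lemma split_intrinsic {T : Set (List Bool)} {u : ℕ → List Bool} (hu : IsSilver T u)
    (j : ℕ) :
    (∃ r, oi u r = j) ↔
      ((∃ s ∈ T, s.length = j+1 ∧ s.getD j false = true) ∧
       (∃ s ∈ T, s.length = j+1 ∧ s.getD j false = false)) := by
  constructor
  · rintro ⟨r, rfl⟩
    constructor
    · refine ⟨silverWord u (fun _ => true) r, ?_, by rw [sw_length], ?_⟩
      · rw [hu]; exact ⟨r, fun _ => true, List.prefix_refl _⟩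
      · exact sw_getD_split u _ (le_refl r)
    · refine ⟨silverWord u (fun _ => false) r, ?_, by rw [sw_length], ?_⟩
      · rw [hu]; exact ⟨r, fun _ => false, List.prefix_refl _⟩
      · exact sw_getD_split u _ (le_refl r)
  · rintro ⟨⟨s, hs, hsl, hsv⟩, ⟨t, ht, htl, htv⟩⟩
    by_contra hns
    push_neg at hns
    have h1 := (mem_char hu).mp hs j (by omega) hns
    have h2 := (mem_char hu).mp ht j (by omega) hns
    rw [hsv] at h1; rw [htv] at h2
    rw [← h1] at h2; simp at h2

lemma oi_unique {T : Set (List Bool)} {u u' : ℕ → List Bool}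
    (hu : IsSilver T u) (hu' : IsSilver T u') : ∀ n, oi u n = oi u' n :=
  strictMono_enum_unique (oi_strictMono u) (oi_strictMono u')
    (fun j => (split_intrinsic hu j).trans (split_intrinsic hu' j).symm)

/-- Silver system with prescribed splitting levels `q` and pattern `g`. -/
def tup (q : ℕ → ℕ) (g : ℕ → Bool) : ℕ → List Bool
  | 0 => List.ofFn (fun i : Fin (q 0) => g i)
  | n + 1 => List.ofFn (fun i : Fin (q (n+1) - (q n + 1)) => g (q n + 1 + i))

/-- The Silver tree with splitting levels `q` and pattern `g`. -/
def STree (q : ℕ → ℕ) (g : ℕ → Bool) : Set (List Bool) :=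
  { s | ∃ (n : ℕ) (i : ℕ → Bool), s <+: silverWord (tup q g) i n }

lemma isSilver_ST (q : ℕ → ℕ) (g : ℕ → Bool) : IsSilver (STree q g) (tup q g) := rfl

lemma oi_tup {q : ℕ → ℕ} (hq : StrictMono q) (g : ℕ → Bool) (n : ℕ) :
    oi (tup q g) n = q n := by
  induction n with
  | zero => rw [oi_zero']; simp [tup]
  | succ n ih =>
    rw [oi_succ', ih]
    have h1 := hq (Nat.lt_succ_self n)
    have hlen : (tup q g (n+1)).length = q (n+1) - (q n + 1) := by
      show (List.ofFn _).length = _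
      rw [List.length_ofFn]
    rw [hlen]
    simp only [Nat.succ_eq_add_one] at h1 ⊢
    omega

lemma patt_tup {q : ℕ → ℕ} (hq : StrictMono q) (g : ℕ → Bool) {j : ℕ}
    (hns : ∀ r, q r ≠ j) : patt (tup q g) j = g j := by
  suffices h : ∀ n (i : ℕ → Bool), j ≤ q n → (silverWord (tup q g) i n).getD j false = g j by
    exact h j (fun _ => false) (le_trans (le_oi (tup q g) j) (le_of_eq (oi_tup hq g j)))
  intro n
  induction n with
  | zero =>
    intro i hj
    have hj' : j < q 0 := lt_of_le_of_ne hj (hns 0).symm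
    show (List.getD (tup q g 0 ++ [i 0]) j false) = g j
    rw [List.getD_eq_getElem _ _ (by simp [tup]; omega),
      List.getElem_append_left (by simp [tup]; omega)]
    simp [tup]
  | succ n ih =>
    intro i hj
    rcases le_or_gt j (q n) with h' | h'
    · rw [prefix_getD (sw_prefix_le (tup q g) i (Nat.le_succ n))
        (by rw [sw_length, oi_tup hq]; omega)]
      exact ih i h'
    · have hj' : j < q (n+1) := lt_of_le_of_ne hj (hns (n+1)).symm
      show (List.getD (silverWord (tup q g) i n ++ (tup q g (n+1) ++ [i (n+1)])) j false) = g j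
      have hlen : (silverWord (tup q g) i n).length = q n + 1 := by
        rw [sw_length, oi_tup hq]
      have hlen2 : (tup q g (n+1)).length = q (n+1) - (q n + 1) := by simp [tup]
      rw [List.getD_eq_getElem _ _ (by simp [hlen, hlen2]; omega),
        List.getElem_append_right (as := silverWord (tup q g) i n) (by omega),
        List.getElem_append_left (as := tup q g (n+1)) (by rw [hlen2, hlen]; omega)]
      have heq : (tup q g (n+1))[j - (silverWord (tup q g) i n).length]'(by
          rw [hlen2, hlen]; omega) = g (q n + 1 + (j - (q n + 1))) := by
        simp [tup, hlen]
      rw [heq]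
      congr 1; omega

lemma mem_ST {q : ℕ → ℕ} (hq : StrictMono q) (g : ℕ → Bool) {s : List Bool} :
    s ∈ STree q g ↔ ∀ j, j < s.length → (∀ r, q r ≠ j) → s.getD j false = g j := by
  rw [mem_char (isSilver_ST q g)]
  constructor
  · intro h j hj hns
    rw [h j hj (fun r => by rw [oi_tup hq]; exact hns r), patt_tup hq g hns]
  · intro h j hj hns
    have hns' : ∀ r, q r ≠ j := fun r => by rw [← oi_tup hq g r]; exact hns r
    rw [h j hj hns', patt_tup hq g hns']

lemma branches_ST {q : ℕ → ℕ} (hq : StrictMono q) (g : ℕ → Bool) {a : ℕ → Bool} :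
    a ∈ branches (STree q g) ↔ ∀ j, (∀ r, q r ≠ j) → a j = g j := by
  rw [branches_char (isSilver_ST q g)]
  constructor
  · intro h j hns
    rw [h j (fun r => by rw [oi_tup hq]; exact hns r), patt_tup hq g hns]
  · intro h j hns
    have hns' : ∀ r, q r ≠ j := fun r => by rw [← oi_tup hq g r]; exact hns r
    rw [h j hns', patt_tup hq g hns']

lemma mem_baire_iff {v : List ℕ} {x : ℕ → ℕ} :
    x ∈ baire v ↔ ∀ i, (h : i < v.length) → x i = v[i] := by
  constructor
  · intro hx i h; exact hx ⟨i, h⟩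
  · intro h i; exact h i.1 i.2

lemma baire_anti {w w' : List ℕ} (h : w <+: w') : baire w' ⊆ baire w := by
  intro x hx
  rw [mem_baire_iff] at *
  intro i hi
  obtain ⟨t, rfl⟩ := h
  rw [hx i (by simp; omega), List.getElem_append_left hi]

lemma cont_step {f : (ℕ → Bool) × (ℕ → ℕ) → (ℕ → Bool)}
    {s : Set ((ℕ → Bool) × (ℕ → ℕ))} (hf : ContinuousOn f s) (m : ℕ)
    {a₀ : ℕ → Bool} {x₀ : ℕ → ℕ} (hz : (a₀, x₀) ∈ s) :
    ∃ N p : ℕ, ∀ a x, (a, x) ∈ s → (∀ j, j < N → a j = a₀ j) →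
      (∀ i, i < p → x i = x₀ i) → f (a, x) m = f (a₀, x₀) m := by
  have hc : ContinuousWithinAt (fun z => f z m) s (a₀, x₀) :=
    ((continuous_apply m).comp_continuousOn hf) _ hz
  have hsing : {b : Bool | b = f (a₀, x₀) m} ∈ nhds (f (a₀, x₀) m) :=
    (isOpen_discrete _).mem_nhds rfl
  have hpre : (fun z => f z m) ⁻¹' {b | b = f (a₀, x₀) m} ∈ nhdsWithin (a₀, x₀) s := hc hsing
  rw [mem_nhdsWithin] at hpre
  obtain ⟨U, hUo, hzU, hUs⟩ := hpre
  have hU : U ∈ nhds (a₀, x₀) := hUo.mem_nhds hzU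
  rw [mem_nhds_prod_iff] at hU
  obtain ⟨u, hu, vv, hv, huv⟩ := hU
  obtain ⟨t1, ⟨y1, N, rfl⟩, hat, htu⟩ :=
    (PiNat.isTopologicalBasis_cylinders (fun _ : ℕ => Bool)).mem_nhds_iff.mp hu
  obtain ⟨t2, ⟨y2, p, rfl⟩, hxt, htv⟩ :=
    (PiNat.isTopologicalBasis_cylinders (fun _ : ℕ => ℕ)).mem_nhds_iff.mp hv
  refine ⟨N, p, fun a x hs ha hx => ?_⟩
  have h1 : a ∈ PiNat.cylinder y1 N := by
    intro i hi
    rw [ha i hi]; exact hat i hi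
  have h2 : x ∈ PiNat.cylinder y2 p := by
    intro i hi
    rw [hx i hi]; exact hxt i hi
  exact hUs ⟨huv ⟨htu h1, htv h2⟩, hs⟩

/-- Overwrite the values of `c` at the first `k+1` splitting levels by `t`. -/
noncomputable def ovv (q : ℕ → ℕ) (k : ℕ) (t : Fin (k+1) → Bool) (c : ℕ → Bool) (j : ℕ) :
    Bool :=
  if h : ∃ r : Fin (k+1), q r.1 = j then t h.choose else c j

lemma ovv_split {q : ℕ → ℕ} (hq : StrictMono q) {k : ℕ} (t : Fin (k+1) → Bool)
    (c : ℕ → Bool) (r : Fin (k+1)) : ovv q k t c (q r.1) = t r := by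
  have h : ∃ r' : Fin (k+1), q r'.1 = q r.1 := ⟨r, rfl⟩
  rw [ovv, dif_pos h]
  congr 1
  have := h.choose_spec
  exact Fin.ext (hq.injective this)

lemma ovv_non {q : ℕ → ℕ} {k j : ℕ} (t : Fin (k+1) → Bool) (c : ℕ → Bool)
    (h : ∀ r : Fin (k+1), q r.1 ≠ j) : ovv q k t c j = c j := by
  rw [ovv, dif_neg (by push_neg; exact h)]


/-- let `T₀` be a Silver tree and `f` be continuous on
`[T₀] × ω^ω`; assume that for every dense `G_δ` set `X ⊆ ω^ω`, all tuples
`v ∈ ω^{<ω}`, `σ ∈ 2^{<ω}`, and every Silver tree `S ⊆ T₀` there are `a ∈ [S]`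
and `x ∈ B_v ∩ X` with `f(a,x) ≠ σ⊕a`. Then for every Silver tree `T ⊆ T₀`,
every `σ`, `v`, and `k` there are `w ⊇ v` and a Silver tree `S ⊑_{k+1} T` such
that `f(a,x) ∉ σ⊕[S]` for all `a ∈ [S]` and `x ∈ B_w`. -/
theorem stmt12 (T₀ : Set (List Bool)) (hT₀ : SilverTree T₀)
    (f : (ℕ → Bool) × (ℕ → ℕ) → (ℕ → Bool))
    (hf : ContinuousOn f (branches T₀ ×ˢ (univ : Set (ℕ → ℕ))))
    (hyp : ∀ X : Set (ℕ → ℕ), IsGδ X → Dense X →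
      ∀ (v : List ℕ) (σ : List Bool) (S : Set (List Bool)),
        SilverTree S → S ⊆ T₀ →
        ∃ a ∈ branches S, ∃ x ∈ baire v ∩ X, f (a, x) ≠ shiftR σ a) :
    ∀ T : Set (List Bool), SilverTree T → T ⊆ T₀ →
      ∀ (σ : List Bool) (v : List ℕ) (k : ℕ),
        ∃ w : List ℕ, v <+: w ∧
          ∃ S : Set (List Bool), SilverTree S ∧ RefinesN S T (k + 1) ∧
            ∀ a ∈ branches S, ∀ x ∈ baire w,
              f (a, x) ∉ shiftR σ '' branches S := by
  intro T hT hTT₀ σ v k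
  obtain ⟨u, hu⟩ := hT
  have hqm : StrictMono (oi u) := oi_strictMono u
  -- the one-step lemma
  have step : ∀ (t' t : Fin (k+1) → Bool) (c : ℕ → Bool) (n : ℕ) (w : List ℕ),
      c ∈ branches T → oi u k < n → σ.length ≤ n → v <+: w →
      ∃ (c' : ℕ → Bool) (n' : ℕ) (w' : List ℕ),
        (c' ∈ branches T ∧ oi u k < n' ∧ σ.length ≤ n' ∧ v <+: w') ∧
        (n ≤ n' ∧ w <+: w' ∧
          ∀ j, j < n → (∀ r : Fin (k+1), oi u r.1 ≠ j) → c' j = c j) ∧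
        ∃ m, m < n' ∧ ∃ ε : Bool,
          (∀ a, a ∈ branches T → (∀ j, j < n' → a j = ovv (oi u) k t' c' j) →
            ∀ x ∈ baire w', f (a, x) m = ε) ∧
          ε ≠ xor (ovv (oi u) k t c' m) (σ.getD m false) := by
    intro t' t c n w hc hn hσn hvw
    have hJex : ∃ J, n ≤ oi u J := ⟨n, le_oi u n⟩
    obtain ⟨J, hJ⟩ := hJex
    have hq'' : StrictMono (fun r => oi u (J + r)) :=
      fun r r' h => hqm (by omega)
    set g'' : ℕ → Bool := ovv (oi u) k t' c with hg''
    -- the step tree is a subtree of T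
    have hcpatt : ∀ j, (∀ r, oi u r ≠ j) → c j = patt u j := (branches_char hu).mp hc
    have hSsub : STree (fun r => oi u (J + r)) g'' ⊆ T := by
      intro s hs
      rw [mem_char hu]
      intro j hj hns
      rw [mem_ST hq''] at hs
      rw [hs j hj (fun r => hns (J + r)), hg'',
        ovv_non _ _ (fun r => hns r.1)]
      exact hcpatt j hns
    -- branches of the step tree
    have hbr : ∀ a, a ∈ branches (STree (fun r => oi u (J + r)) g'') →
        a ∈ branches T ∧ ∀ j, j < n → a j = ovv (oi u) k t' c j := by
      intro a ha
      rw [branches_ST hq''] at ha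
      constructor
      · rw [branches_char hu]
        intro j hns
        rw [ha j (fun r => hns (J + r)), hg'', ovv_non _ _ (fun r => hns r.1)]
        exact hcpatt j hns
      · intro j hj
        apply ha j
        intro r
        have : n ≤ oi u (J + r) := le_trans hJ (hqm.monotone (by omega))
        omega
    -- apply the hypothesis
    set σ' : List Bool := List.ofFn (fun i : Fin n => xor (σ.getD i.1 false)
      (xor (ovv (oi u) k t c i.1) (ovv (oi u) k t' c i.1))) with hσ'
    obtain ⟨a₀, ha₀, x₀, hx₀, hne⟩ := hyp univ IsGδ.univ dense_univ w σ'
      (STree (fun r => oi u (J + r)) g'') ⟨tup _ _, isSilver_ST _ _⟩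
      (hSsub.trans hTT₀)
    obtain ⟨m, hm⟩ := Function.ne_iff.mp hne
    have hx₀w : x₀ ∈ baire w := hx₀.1
    obtain ⟨ha₀T, ha₀n⟩ := hbr a₀ ha₀
    -- low splitting bits of a₀ are t'
    have ha₀low : ∀ r : Fin (k+1), a₀ (oi u r.1) = t' r := by
      intro r
      have h1 : oi u r.1 < n := by
        have : oi u r.1 ≤ oi u k := hqm.monotone (by omega)
        omega
      rw [ha₀n _ h1, ovv_split hqm]
    have haux : ∀ j, ovv (oi u) k t' a₀ j = a₀ j := by
      intro j
      by_cases hsp : ∃ r : Fin (k+1), oi u r.1 = j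
      · obtain ⟨r, rfl⟩ := hsp
        rw [ovv_split hqm, ha₀low r]
      · push_neg at hsp
        exact ovv_non _ _ hsp
    -- the key inequality
    have hkey : f (a₀, x₀) m ≠ xor (ovv (oi u) k t a₀ m) (σ.getD m false) := by
      intro hcontra
      apply hm
      rw [hcontra]
      show _ = xor (a₀ m) (σ'.getD m false)
      rcases lt_or_ge m n with hmn | hmn
      · have hσ'm : σ'.getD m false = xor (σ.getD m false)
            (xor (ovv (oi u) k t c m) (ovv (oi u) k t' c m)) := by
          rw [hσ', List.getD_eq_getElem _ _ (by simpa using hmn)]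
          simp
        have ha₀m : a₀ m = ovv (oi u) k t' c m := ha₀n m hmn
        have hovv : ovv (oi u) k t a₀ m = ovv (oi u) k t c m := by
          by_cases hsp : ∃ r : Fin (k+1), oi u r.1 = m
          · obtain ⟨r, rfl⟩ := hsp
            rw [ovv_split hqm, ovv_split hqm]
          · push_neg at hsp
            rw [ovv_non _ _ hsp, ovv_non _ _ hsp, ha₀m, ovv_non _ _ hsp]
        rw [hσ'm, ha₀m, hovv]
        cases (ovv (oi u) k t c m) <;> cases (ovv (oi u) k t' c m) <;>
          cases (σ.getD m false) <;> rfl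
      · have hσ'm : σ'.getD m false = false :=
          List.getD_eq_default _ _ (by rw [hσ']; simpa using hmn)
        have hσm : σ.getD m false = false := List.getD_eq_default _ _ (by omega)
        have hovv : ovv (oi u) k t a₀ m = a₀ m := by
          apply ovv_non
          intro r
          have : oi u r.1 ≤ oi u k := hqm.monotone (by omega)
          omega
        rw [hσ'm, hσm, hovv]
    -- continuity
    have ha₀T₀ : (a₀, x₀) ∈ branches T₀ ×ˢ (univ : Set (ℕ → ℕ)) :=
      ⟨branches_mono hTT₀ ha₀T, trivial⟩
    obtain ⟨N, p, hNp⟩ := cont_step hf m ha₀T₀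
    refine ⟨a₀, max n (max (m+1) N),
      List.ofFn (fun i : Fin (max w.length p) => x₀ i), ?_, ?_, ?_⟩
    · refine ⟨ha₀T, by omega, by omega, ?_⟩
      refine hvw.trans (prefix_of_getD (d := 0)
        (by simp only [List.length_ofFn]; exact le_max_left _ _) ?_)
      intro j hj
      rw [List.getD_eq_getElem _ _ hj, List.getD_eq_getElem _ _ (by simp; omega)]
      rw [List.getElem_ofFn]
      exact ((mem_baire_iff.mp hx₀w) j hj).symm
    · refine ⟨by omega, ?_, ?_⟩
      · refine prefix_of_getD (d := 0)
          (by simp only [List.length_ofFn]; exact le_max_left _ _) ?_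
        intro j hj
        rw [List.getD_eq_getElem _ _ hj, List.getD_eq_getElem _ _ (by simp; omega)]
        rw [List.getElem_ofFn]
        exact ((mem_baire_iff.mp hx₀w) j hj).symm
      · intro j hj hns
        rw [ha₀n j hj, ovv_non _ _ hns]
    · refine ⟨m, by omega, f (a₀, x₀) m, ?_, hkey⟩
      intro a haT hagree x hxw'
      have hxfacts : ∀ i, i < max w.length p → x i = x₀ i := by
        intro i hi
        have := (mem_baire_iff.mp hxw') i (by simpa using hi)
        rw [this, List.getElem_ofFn]
      apply hNp a x ⟨branches_mono hTT₀ haT, trivial⟩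
      · intro j hj
        rw [hagree j (by omega), haux j]
      · intro i hi
        exact hxfacts i (by omega)
  -- monotonicity of the guarantee
  have gmono : ∀ (t' t : Fin (k+1) → Bool) (c : ℕ → Bool) (n : ℕ) (w : List ℕ)
      (c' : ℕ → Bool) (n' : ℕ) (w' : List ℕ),
      n ≤ n' → w <+: w' →
      (∀ j, j < n → (∀ r : Fin (k+1), oi u r.1 ≠ j) → c' j = c j) →
      (∃ m, m < n ∧ ∃ ε : Bool,
        (∀ a, a ∈ branches T → (∀ j, j < n → a j = ovv (oi u) k t' c j) →
          ∀ x ∈ baire w, f (a, x) m = ε) ∧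
        ε ≠ xor (ovv (oi u) k t c m) (σ.getD m false)) →
      (∃ m, m < n' ∧ ∃ ε : Bool,
        (∀ a, a ∈ branches T → (∀ j, j < n' → a j = ovv (oi u) k t' c' j) →
          ∀ x ∈ baire w', f (a, x) m = ε) ∧
        ε ≠ xor (ovv (oi u) k t c' m) (σ.getD m false)) := by
    rintro t' t c n w c' n' w' hnn hww hcc ⟨m, hm, ε, hcond, hne⟩
    have hovv_eq : ∀ (tt : Fin (k+1) → Bool) j, j < n →
        ovv (oi u) k tt c' j = ovv (oi u) k tt c j := by
      intro tt j hj
      by_cases hsp : ∃ r : Fin (k+1), oi u r.1 = j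
      · obtain ⟨r, rfl⟩ := hsp
        rw [ovv_split hqm, ovv_split hqm]
      · push_neg at hsp
        rw [ovv_non _ _ hsp, ovv_non _ _ hsp, hcc j hj hsp]
    refine ⟨m, by omega, ε, ?_, ?_⟩
    · intro a haT hagree x hx
      apply hcond a haT _ x (baire_anti hww hx)
      intro j hj
      rw [hagree j (by omega), hovv_eq t' j hj]
    · rw [hovv_eq t m hm]
      exact hne
  -- the finite recursion
  have recn : ∀ (L : List ((Fin (k+1) → Bool) × (Fin (k+1) → Bool)))
      (c : ℕ → Bool) (n : ℕ) (w : List ℕ),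
      c ∈ branches T → oi u k < n → σ.length ≤ n → v <+: w →
      ∃ (c' : ℕ → Bool) (n' : ℕ) (w' : List ℕ),
        (c' ∈ branches T ∧ oi u k < n' ∧ σ.length ≤ n' ∧ v <+: w') ∧
        (n ≤ n' ∧ w <+: w' ∧
          ∀ j, j < n → (∀ r : Fin (k+1), oi u r.1 ≠ j) → c' j = c j) ∧
        ∀ pr ∈ L, ∃ m, m < n' ∧ ∃ ε : Bool,
          (∀ a, a ∈ branches T → (∀ j, j < n' → a j = ovv (oi u) k pr.1 c' j) →
            ∀ x ∈ baire w', f (a, x) m = ε) ∧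
          ε ≠ xor (ovv (oi u) k pr.2 c' m) (σ.getD m false) := by
    intro L
    induction L with
    | nil =>
      intro c n w h1 h2 h3 h4
      exact ⟨c, n, w, ⟨h1, h2, h3, h4⟩,
        ⟨le_refl n, List.prefix_refl w, fun j _ _ => rfl⟩, by simp⟩
    | cons pr L ih =>
      intro c n w h1 h2 h3 h4
      obtain ⟨c1, n1, w1, ⟨i1, i2, i3, i4⟩, ⟨e1, e2, e3⟩, hG1⟩ :=
        step pr.1 pr.2 c n w h1 h2 h3 h4
      obtain ⟨c2, n2, w2, hInv2, ⟨e1', e2', e3'⟩, hG2⟩ := ih c1 n1 w1 i1 i2 i3 i4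
      refine ⟨c2, n2, w2, hInv2, ⟨by omega, e2.trans e2', ?_⟩, ?_⟩
      · intro j hj hns
        rw [e3' j (by omega) hns, e3 j hj hns]
      · intro pr' hpr'
        rcases List.mem_cons.mp hpr' with h | h
        · subst h
          exact gmono pr'.1 pr'.2 c1 n1 w1 c2 n2 w2 e1' e2' e3' hG1
        · exact hG2 pr' h
  -- initial state
  have hc₀ : patt u ∈ branches T := (branches_char hu).mpr (fun j _ => rfl)
  obtain ⟨c, n, w, ⟨hcT, hkn, hσn, hvw⟩, -, hGall'⟩ :=
    recn (Finset.univ.toList) (patt u) (max (oi u k + 1) σ.length) v hc₀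
      (by omega) (by omega) (List.prefix_refl v)
  have hGall : ∀ t' t : Fin (k+1) → Bool, ∃ m, m < n ∧ ∃ ε : Bool,
      (∀ a, a ∈ branches T → (∀ j, j < n → a j = ovv (oi u) k t' c j) →
        ∀ x ∈ baire w, f (a, x) m = ε) ∧
      ε ≠ xor (ovv (oi u) k t c m) (σ.getD m false) :=
    fun t' t => hGall' (t', t) (by simp [Finset.mem_toList])
  -- the final tree
  obtain ⟨J, hJ⟩ : ∃ J, n ≤ oi u J := ⟨n, le_oi u n⟩
  set q' : ℕ → ℕ := fun r => if r ≤ k then oi u r else oi u (J + (r - (k+1)))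
    with hq'def
  have hq'big : ∀ r, ¬ r ≤ k → n ≤ q' r := by
    intro r hr
    simp only [hq'def, if_neg hr]
    exact le_trans hJ (hqm.monotone (by omega))
  have hq' : StrictMono q' := by
    intro r r' hrr'
    by_cases h1 : r ≤ k <;> by_cases h2 : r' ≤ k
    · simp only [hq'def, if_pos h1, if_pos h2]; exact hqm hrr'
    · simp only [hq'def, if_pos h1, if_neg h2]
      have ha : oi u r ≤ oi u k := hqm.monotone h1
      have hb := hq'big r' h2
      simp only [hq'def, if_neg h2] at hb
      omega
    · omega
    · simp only [hq'def, if_neg h1, if_neg h2]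
      exact hqm (by omega)
  have hq'range : ∀ r, ∃ r'', q' r = oi u r'' := by
    intro r
    by_cases h : r ≤ k
    · exact ⟨r, by simp only [hq'def, if_pos h]⟩
    · exact ⟨J + (r - (k+1)), by simp only [hq'def, if_neg h]⟩
  -- low splitting values of branches of S, positions < n
  have hSval : ∀ b, b ∈ branches (STree q' c) → ∀ j, j < n →
      (∀ r : Fin (k+1), oi u r.1 ≠ j) → b j = c j := by
    intro b hb j hj hns
    apply (branches_ST hq' c).mp hb j
    intro r hqr
    by_cases h : r ≤ k
    · exact hns ⟨r, by omega⟩ (by simpa only [hq'def, if_pos h] using hqr)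
    · have := hq'big r h
      omega
  have hSlow : ∀ b, b ∈ branches (STree q' c) → ∀ j, j < n →
      b j = ovv (oi u) k (fun r => b (oi u r.1)) c j := by
    intro b hb j hj
    by_cases hsp : ∃ r : Fin (k+1), oi u r.1 = j
    · obtain ⟨r, rfl⟩ := hsp
      rw [ovv_split hqm]
    · push_neg at hsp
      rw [ovv_non _ _ hsp]
      exact hSval b hb j hj hsp
  -- subtree of T
  have hsub : STree q' c ⊆ T := by
    intro s hs
    rw [mem_char hu]
    intro j hj hns
    rw [mem_ST hq'] at hs
    have hns' : ∀ r, q' r ≠ j := by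
      intro r
      obtain ⟨r'', hr''⟩ := hq'range r
      rw [hr'']; exact hns r''
    rw [hs j hj hns']
    exact (branches_char hu).mp hcT j hns
  refine ⟨w, hvw, STree q' c, ⟨tup q' c, isSilver_ST q' c⟩, ⟨hsub, ?_⟩, ?_⟩
  · intro uS uT hS hT' r hr
    rw [oi_unique hS (isSilver_ST q' c) r, oi_tup hq' c r, ← oi_unique hu hT' r]
    simp only [hq'def, if_pos (by omega : r ≤ k)]
  · intro a ha x hx
    rintro ⟨b, hb, hfb⟩
    obtain ⟨m, hm, ε, hcond, hne⟩ := hGall (fun r => a (oi u r.1)) (fun r => b (oi u r.1))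
    apply hne
    have h1 : f (a, x) m = ε := by
      apply hcond a (branches_mono hsub ha) _ x hx
      intro j hj
      exact hSlow a ha j hj
    have h2 : f (a, x) m = xor (b m) (σ.getD m false) := by
      rw [← hfb]; rfl
    have h3 : b m = ovv (oi u) k (fun r => b (oi u r.1)) c m := hSlow b hb m hm
    rw [← h1, h2, h3]
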